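/- Let p be a prime, n ≥ 1, and a_1, …, a_n ∈ ℤ[1/p] with |a_1|_p > 1 and |a_j|_p ≤ |a_1|_p for all 2 ≤ j ≤ n (these conditions hold for the coefficients of the minimal polynomial X^n − a_1X^{n−1} − ⋯ − a_n of any Pisot–Chabauty or Salem–Chabauty number). Define α_0 = a_1 and α_{k+1} = a_1 + a_2/α_k + ⋯ + a_n/α_k^{n−1} in ℚ_p. Then the sequence (α_k) converges in ℚ_p to a limit α satisfying α^n = a_1α^{n−1} + a_2α^{n−2} + ⋯ + a_n and |α|_p = |a_1|_p. -/

import Mathlib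

/-!
The recurrence is the iteration of `f x = a 1 + a 2 / x + ⋯ + a n / x ^ (n - 1)`. On the sphere
`‖x‖ = ‖a 1‖` every term but the first has norm at most `1 < ‖a 1‖`, so by the ultrametric
inequality `f` maps the sphere into itself; and since `x ^ m - y ^ m` has norm at most
`‖a 1‖ ^ (m - 1) * ‖x - y‖` there, `f` is a contraction with constant `‖a 1‖⁻¹`. The Banach fixed
point theorem on the (closed, hence complete) sphere gives the limit, and clearing denominators in
`L = f L` gives the polynomial equation.
-/

open Filter Topology Function Metric Set

namespace IsUltrametricDist

variable {K : Type*} [NormedField K] [IsUltrametricDist K]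

theorem norm_pow_sub_pow_le {x y : K} {r : ℝ} (hx : ‖x‖ ≤ r) (hy : ‖y‖ ≤ r) (m : ℕ) :
    ‖x ^ m - y ^ m‖ ≤ r ^ (m - 1) * ‖x - y‖ := by
  have hr : 0 ≤ r := (norm_nonneg x).trans hx
  rw [← geom_sum₂_mul, norm_mul]
  gcongr
  refine norm_sum_le_of_forall_le_of_nonneg (pow_nonneg hr _) fun i hi => ?_
  have hi : i + (m - 1 - i) = m - 1 := by have := Finset.mem_range.mp hi; omega
  calc ‖x ^ i * y ^ (m - 1 - i)‖ ≤ r ^ i * r ^ (m - 1 - i) := by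
        rw [norm_mul, norm_pow, norm_pow]
        gcongr
    _ = r ^ (m - 1) := by rw [← pow_add, hi]

theorem norm_div_pow_sub_div_pow_le {c x y : K} {r : ℝ} (hr : 1 ≤ r) (hc : ‖c‖ ≤ r)
    (hx : ‖x‖ = r) (hy : ‖y‖ = r) {m : ℕ} (hm : 1 ≤ m) :
    ‖c / x ^ m - c / y ^ m‖ ≤ ‖x - y‖ / r := by
  have hr0 : 0 < r := one_pos.trans_le hr
  have hx0 : x ≠ 0 := norm_ne_zero_iff.mp (hx ▸ hr0.ne')
  have hy0 : y ≠ 0 := norm_ne_zero_iff.mp (hy ▸ hr0.ne')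
  have hsub : c / x ^ m - c / y ^ m = c * (y ^ m - x ^ m) / (x ^ m * y ^ m) := by
    rw [div_sub_div _ _ (pow_ne_zero _ hx0) (pow_ne_zero _ hy0)]
    ring
  have hdiff := norm_pow_sub_pow_le hy.le hx.le m
  calc ‖c / x ^ m - c / y ^ m‖ = ‖c‖ * ‖y ^ m - x ^ m‖ / (r ^ m * r ^ m) := by
        rw [hsub, norm_div, norm_mul, norm_mul, norm_pow, norm_pow, hx, hy]
    _ ≤ r * (r ^ (m - 1) * ‖y - x‖) / (r ^ m * r ^ m) := by gcongr
    _ = ‖x - y‖ / r ^ m := by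
        rw [← mul_assoc, ← pow_succ', Nat.sub_add_cancel hm, norm_sub_rev,
          mul_div_mul_left _ _ (pow_ne_zero _ hr0.ne')]
    _ ≤ ‖x - y‖ / r := div_le_div_of_nonneg_left (norm_nonneg _) hr0 (le_self_pow₀ hr (by omega))

end IsUltrametricDist

theorem norm_div_pow_le_one {K : Type*} [NormedField K] {c x : K} (hc : ‖c‖ ≤ ‖x‖)
    (hx : 1 ≤ ‖x‖) {m : ℕ} (hm : 1 ≤ m) : ‖c / x ^ m‖ ≤ 1 := by
  rw [norm_div, norm_pow, div_le_one (by positivity)]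
  exact hc.trans (le_self_pow₀ hx (by omega))

def recurrenceMap {K : Type*} [DivisionRing K] (a : ℕ → K) (n : ℕ) (x : K) : K :=
  ∑ j ∈ Finset.Icc 1 n, a j / x ^ (j - 1)

theorem pow_eq_sum_of_isFixedPt_recurrenceMap {K : Type*} [Field K] {a : ℕ → K} {n : ℕ}
    (hn : 1 ≤ n) {x : K} (hx : x ≠ 0) (hfix : IsFixedPt (recurrenceMap a n) x) :
    x ^ n = ∑ j ∈ Finset.Icc 1 n, a j * x ^ (n - j) := by
  calc x ^ n = x ^ (n - 1) * recurrenceMap a n x := by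
        rw [hfix.eq, ← pow_succ, Nat.sub_add_cancel hn]
    _ = ∑ j ∈ Finset.Icc 1 n, a j * x ^ (n - j) := by
        rw [recurrenceMap, Finset.mul_sum]
        refine Finset.sum_congr rfl fun j hj => ?_
        obtain ⟨hj1, hjn⟩ := Finset.mem_Icc.mp hj
        rw [show n - 1 = (n - j) + (j - 1) by omega, pow_add]
        field_simp

section Ultrametric

variable {K : Type*} [NormedField K] [IsUltrametricDist K] {a : ℕ → K} {n : ℕ}

theorem norm_recurrenceMap (hn : 1 ≤ n) (ha1 : 1 < ‖a 1‖)
    (haj : ∀ j, 2 ≤ j → j ≤ n → ‖a j‖ ≤ ‖a 1‖) {x : K} (hx : ‖x‖ = ‖a 1‖) :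
    ‖recurrenceMap a n x‖ = ‖a 1‖ := by
  have h1 : 1 ∈ Finset.Icc 1 n := Finset.mem_Icc.mpr ⟨le_rfl, hn⟩
  have htail : ‖∑ j ∈ (Finset.Icc 1 n).erase 1, a j / x ^ (j - 1)‖ ≤ 1 := by
    refine IsUltrametricDist.norm_sum_le_of_forall_le_of_nonneg zero_le_one fun j hj => ?_
    obtain ⟨hj1, hj⟩ := Finset.mem_erase.mp hj
    obtain ⟨hj1', hjn⟩ := Finset.mem_Icc.mp hj
    exact norm_div_pow_le_one (hx ▸ haj j (by omega) hjn) (hx ▸ ha1.le) (by omega)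
  rw [recurrenceMap, ← Finset.add_sum_erase _ _ h1, Nat.sub_self, pow_zero, div_one,
    IsUltrametricDist.norm_add_eq_max_of_norm_ne_norm (htail.trans_lt ha1).ne']
  exact max_eq_left (htail.trans ha1.le)

theorem norm_recurrenceMap_sub_le (ha1 : 1 ≤ ‖a 1‖) (haj : ∀ j, 2 ≤ j → j ≤ n → ‖a j‖ ≤ ‖a 1‖)
    {x y : K} (hx : ‖x‖ = ‖a 1‖) (hy : ‖y‖ = ‖a 1‖) :
    ‖recurrenceMap a n x - recurrenceMap a n y‖ ≤ ‖x - y‖ / ‖a 1‖ := by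
  rw [recurrenceMap, recurrenceMap, ← Finset.sum_sub_distrib]
  refine IsUltrametricDist.norm_sum_le_of_forall_le_of_nonneg (by positivity) fun j hj => ?_
  obtain ⟨hj1, hjn⟩ := Finset.mem_Icc.mp hj
  obtain rfl | hj2 := hj1.eq_or_lt
  · simp only [Nat.sub_self, pow_zero, div_one, sub_self, norm_zero]
    positivity
  · exact IsUltrametricDist.norm_div_pow_sub_div_pow_le ha1 (haj j hj2 hjn) hx hy (by omega)

theorem exists_isFixedPt_tendsto_iterate_recurrenceMap [CompleteSpace K] (hn : 1 ≤ n)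
    (ha1 : 1 < ‖a 1‖) (haj : ∀ j, 2 ≤ j → j ≤ n → ‖a j‖ ≤ ‖a 1‖) {x : K} (hx : ‖x‖ = ‖a 1‖) :
    ∃ L, ‖L‖ = ‖a 1‖ ∧ IsFixedPt (recurrenceMap a n) L ∧
      Tendsto (fun k => (recurrenceMap a n)^[k] x) atTop (𝓝 L) := by
  have hmaps : MapsTo (recurrenceMap a n) (sphere 0 ‖a 1‖) (sphere 0 ‖a 1‖) := fun y hy =>
    mem_sphere_zero_iff_norm.mpr (norm_recurrenceMap hn ha1 haj (mem_sphere_zero_iff_norm.mp hy))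
  have hcontr : ContractingWith ‖a 1‖₊⁻¹ (hmaps.restrict _ _ _) := by
    refine ⟨inv_lt_one_of_one_lt₀ ha1, LipschitzWith.of_dist_le_mul fun y z => ?_⟩
    rw [Subtype.dist_eq, Subtype.dist_eq, dist_eq_norm, dist_eq_norm, NNReal.coe_inv, coe_nnnorm,
      inv_mul_eq_div]
    exact norm_recurrenceMap_sub_le ha1.le haj (mem_sphere_zero_iff_norm.mp y.2)
      (mem_sphere_zero_iff_norm.mp z.2)
  obtain ⟨L, hL, hfix, hlim, -⟩ := hcontr.exists_fixedPoint' isClosed_sphere.isComplete hmaps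
    (mem_sphere_zero_iff_norm.mpr hx) (edist_ne_top _ _)
  exact ⟨L, mem_sphere_zero_iff_norm.mp hL, hfix, hlim⟩

end Ultrametric

theorem padic_recurrence_tendsto_root_general (p : ℕ) [Fact p.Prime] (n : ℕ) (hn : 1 ≤ n)
    (a : ℕ → ℚ_[p])
    (ha1 : 1 < ‖a 1‖)
    (haj : ∀ j, 2 ≤ j → j ≤ n → ‖a j‖ ≤ ‖a 1‖)
    (α : ℕ → ℚ_[p]) (h0 : α 0 = a 1)
    (hrec : ∀ k, α (k + 1) = ∑ j ∈ Finset.Icc 1 n, a j / α k ^ (j - 1)) :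
    ∃ L : ℚ_[p], Filter.Tendsto α Filter.atTop (nhds L) ∧
      L ^ n = ∑ j ∈ Finset.Icc 1 n, a j * L ^ (n - j) ∧ ‖L‖ = ‖a 1‖ := by
  obtain ⟨L, hLnorm, hfix, hlim⟩ :=
    exists_isFixedPt_tendsto_iterate_recurrenceMap (x := a 1) hn ha1 haj rfl
  have hα : α = fun k => (recurrenceMap a n)^[k] (a 1) := by
    funext k
    induction k with
    | zero => exact h0
    | succ k ih => rw [hrec, iterate_succ_apply', ← ih, recurrenceMap]
  have hL0 : L ≠ 0 := norm_ne_zero_iff.mp (hLnorm ▸ (one_pos.trans ha1).ne')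
  exact ⟨L, hα ▸ hlim, pow_eq_sum_of_isFixedPt_recurrenceMap hn hL0 hfix, hLnorm⟩

/-- For `a_1, …, a_n ∈ ℤ[1/p] ⊆ ℚ_p` with `|a_1|_p > 1` and
`|a_j|_p ≤ |a_1|_p` for `2 ≤ j ≤ n`, the sequence `α_0 = a_1`,
`α_{k+1} = a_1 + a_2/α_k + ⋯ + a_n/α_k^(n−1)` converges in `ℚ_p` to a limit `α` with
`α^n = a_1 α^(n−1) + ⋯ + a_n` and `|α|_p = |a_1|_p`. -/
theorem padic_recurrence_tendsto_root (p : ℕ) [Fact p.Prime] (n : ℕ) (hn : 1 ≤ n)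
    (a : ℕ → ℚ_[p])
    (haZ : ∀ j, 1 ≤ j → j ≤ n → ∃ m : ℤ, ∃ k : ℕ, a j = (m : ℚ_[p]) / (p : ℚ_[p]) ^ k)
    (ha1 : 1 < ‖a 1‖)
    (haj : ∀ j, 2 ≤ j → j ≤ n → ‖a j‖ ≤ ‖a 1‖)
    (α : ℕ → ℚ_[p]) (h0 : α 0 = a 1)
    (hrec : ∀ k, α (k + 1) = ∑ j ∈ Finset.Icc 1 n, a j / α k ^ (j - 1)) :
    ∃ L : ℚ_[p], Filter.Tendsto α Filter.atTop (nhds L) ∧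
      L ^ n = ∑ j ∈ Finset.Icc 1 n, a j * L ^ (n - j) ∧ ‖L‖ = ‖a 1‖ :=
  padic_recurrence_tendsto_root_general p n hn a ha1 haj α h0 hrec
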